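/- Fix a positive integer P, complex gains g_1, …, g_P ∈ ℂ, and angles θ_1, …, θ_P and ψ_1, …, ψ_P in ℝ such that for all n ≠ m, sin θ_n − sin θ_m is not an even integer and sin ψ_n − sin ψ_m is not an even integer. For each positive integer N define the channel matrix H_N = (N/√P)·∑_{n=1}^{P} g_n · a_N(θ_n) a_N(ψ_n)^* ∈ ℂ^{N×N}. Then for each m ∈ {1,…,P}, (1/N)·a_N(θ_m)^* H_N a_N(ψ_m) → g_m/√P as N → ∞. (Asymptotic version of Lemma 2 for the multipath channel model of Equation (1) with N_BS = N_UE = N: beamforming matched to path m asymptotically extracts exactly the gain of path m.) -/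

import Mathlib

open Filter Matrix

/-- The ULA steering vector `a_N(θ) ∈ ℂ^N`, with `n`-th entry
`(1/√N)·exp(−i·π·n·sin θ)`. -/
noncomputable def steering (N : ℕ) (θ : ℝ) : EuclideanSpace ℂ (Fin N) :=
  WithLp.toLp 2 fun n : Fin N => (1 / Real.sqrt N : ℝ) *
    Complex.exp (-(Complex.I * Real.pi * n * Real.sin θ))

/-- The sesquilinear quantity `w^* H z`. -/
noncomputable def quadForm {M N : ℕ} (w : EuclideanSpace ℂ (Fin M))
    (H : Matrix (Fin M) (Fin N) ℂ) (z : EuclideanSpace ℂ (Fin N)) : ℂ :=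
  dotProduct (star (w : Fin M → ℂ)) (H.mulVec (z : Fin N → ℂ))

/-- The multipath channel `H_N = (N/√P)·∑_n g_n · a_N(θ_n) a_N(ψ_n)^*`. -/
noncomputable def channel (P : ℕ) (g : Fin P → ℂ) (θ ψ : Fin P → ℝ) (N : ℕ) :
    Matrix (Fin N) (Fin N) ℂ :=
  ((N : ℂ) / (Real.sqrt P : ℂ)) •
    ∑ n : Fin P, g n •
      Matrix.vecMulVec (steering N (θ n))
        (fun l => (starRingEnd ℂ) (steering N (ψ n) l))

/-!
The inner product of two steering vectors is a normalized geometric sum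
`a_N(a)^* a_N(b) = (1/N) ∑_{k<N} r^k` with `r = exp(-iπ(sin b - sin a))` on the unit circle:
it equals `1` when `a = b`, has modulus at most `1`, and is `O(1/N)` when `r ≠ 1`, i.e. when
`sin b - sin a` is not an even integer. Expanding `a_N(θ_m)^* H_N a_N(ψ_m)` along the paths, the
factor `N` of `H_N` cancels the `1/N`, the term `n = m` contributes `g_m/√P`, and every term
`n ≠ m` vanishes in the limit because its `θ`-factor tends to `0` while its `ψ`-factor is bounded.
-/

open Finset Topology Complex ComplexConjugate
open scoped Real

section GeomMean

variable {𝕜 : Type*} [RCLike 𝕜] {r : 𝕜}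

theorem norm_inv_natCast_mul_geom_sum_le_one (hr : ‖r‖ ≤ 1) (N : ℕ) :
    ‖(N : 𝕜)⁻¹ * ∑ k ∈ range N, r ^ k‖ ≤ 1 := by
  rcases N.eq_zero_or_pos with rfl | hN
  · simp
  calc ‖(N : 𝕜)⁻¹ * ∑ k ∈ range N, r ^ k‖ ≤ (N : ℝ)⁻¹ * ∑ _k ∈ range N, (1 : ℝ) := by
        rw [norm_mul, norm_inv, RCLike.norm_natCast]
        gcongr
        refine (norm_sum_le _ _).trans (sum_le_sum fun k _ => ?_)
        rw [norm_pow]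
        exact pow_le_one₀ (norm_nonneg r) hr
    _ = 1 := by simp [hN.ne']

theorem tendsto_inv_natCast_mul_geom_sum_zero (hr : ‖r‖ ≤ 1) (hr1 : r ≠ 1) :
    Tendsto (fun N : ℕ => (N : 𝕜)⁻¹ * ∑ k ∈ range N, r ^ k) atTop (𝓝 0) := by
  refine squeeze_zero_norm (fun N => ?_) (tendsto_const_div_atTop_nhds_zero_nat (2 / ‖r - 1‖))
  have hpow : ‖r ^ N - 1‖ ≤ 2 := by
    refine (norm_sub_le _ _).trans ?_
    rw [norm_pow, norm_one]
    linarith [pow_le_one₀ (norm_nonneg r) hr (n := N)]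
  rw [geom_sum_eq hr1, norm_mul, norm_div, norm_inv, RCLike.norm_natCast, inv_mul_eq_div]
  exact div_le_div_of_nonneg_right (div_le_div_of_nonneg_right hpow (norm_nonneg (r - 1)))
    N.cast_nonneg

end GeomMean

theorem exp_neg_pi_mul_I_ne_one {x : ℝ} (hx : ∀ k : ℤ, x ≠ 2 * k) :
    Complex.exp (↑(-(π * x)) * I) ≠ 1 := by
  rw [Ne, Complex.exp_eq_one_iff]
  rintro ⟨n, hn⟩
  have hreal : -(π * x) = n * (2 * π) := by
    apply Complex.ofReal_injective
    apply mul_right_cancel₀ I_ne_zero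
    push_cast at hn ⊢
    linear_combination hn
  exact hx (-n) (mul_left_cancel₀ Real.pi_ne_zero (by push_cast; linear_combination -hreal))

theorem inner_steering (N : ℕ) (a b : ℝ) :
    inner ℂ (steering N a) (steering N b) =
      (N : ℂ)⁻¹ * ∑ k ∈ range N, Complex.exp (↑(-(π * (Real.sin b - Real.sin a))) * I) ^ k := by
  rw [EuclideanSpace.inner_eq_star_dotProduct, dotProduct, mul_sum, ← Fin.sum_univ_eq_sum_range]
  refine sum_congr rfl fun k _ => ?_
  have hscale : ((1 / √N : ℝ) : ℂ) * ((1 / √N : ℝ) : ℂ) = (N : ℂ)⁻¹ := by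
    rw [← ofReal_mul, div_mul_div_comm, one_mul, Real.mul_self_sqrt N.cast_nonneg]
    norm_num
  simp only [steering, Pi.star_apply, RCLike.star_def, map_mul, map_neg, ← Complex.exp_conj,
    Complex.conj_ofReal, conj_I, map_natCast, ← Complex.exp_nat_mul]
  rw [mul_mul_mul_comm, hscale, ← Complex.exp_add]
  congr 2
  push_cast
  ring

theorem inner_steering_self {N : ℕ} (hN : N ≠ 0) (a : ℝ) :
    inner ℂ (steering N a) (steering N a) = 1 := by
  rw [inner_steering]
  simp [hN]

theorem norm_inner_steering_le_one (N : ℕ) (a b : ℝ) :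
    ‖inner ℂ (steering N a) (steering N b)‖ ≤ 1 := by
  rw [inner_steering]
  exact norm_inv_natCast_mul_geom_sum_le_one (norm_exp_ofReal_mul_I _).le N

theorem tendsto_inner_steering_zero {a b : ℝ} (h : ∀ k : ℤ, Real.sin b - Real.sin a ≠ 2 * k) :
    Tendsto (fun N => inner ℂ (steering N a) (steering N b)) atTop (𝓝 0) := by
  simp only [inner_steering]
  exact tendsto_inv_natCast_mul_geom_sum_zero (norm_exp_ofReal_mul_I _).le
    (exp_neg_pi_mul_I_ne_one h)

section QuadForm

variable {M N : ℕ} (w : EuclideanSpace ℂ (Fin M)) (z : EuclideanSpace ℂ (Fin N))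

theorem quadForm_smul (c : ℂ) (H : Matrix (Fin M) (Fin N) ℂ) :
    quadForm w (c • H) z = c * quadForm w H z := by
  rw [quadForm, quadForm, smul_mulVec, dotProduct_smul, smul_eq_mul]

theorem quadForm_sum {ι : Type*} (s : Finset ι) (H : ι → Matrix (Fin M) (Fin N) ℂ) :
    quadForm w (∑ i ∈ s, H i) z = ∑ i ∈ s, quadForm w (H i) z := by
  rw [quadForm, sum_mulVec, dotProduct_sum]
  rfl

theorem quadForm_vecMulVec (u : EuclideanSpace ℂ (Fin M)) (v : EuclideanSpace ℂ (Fin N)) :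
    quadForm w (vecMulVec u fun l => conj (v l)) z = inner ℂ w u * inner ℂ v z := by
  rw [quadForm, vecMulVec_mulVec, op_smul_eq_smul, dotProduct_smul, smul_eq_mul, mul_comm,
    EuclideanSpace.inner_eq_star_dotProduct, EuclideanSpace.inner_eq_star_dotProduct,
    dotProduct_comm (star w.ofLp), dotProduct_comm z.ofLp]
  rfl

end QuadForm

theorem quadForm_channel (P : ℕ) (g : Fin P → ℂ) (θ ψ : Fin P → ℝ) (N : ℕ)
    (w z : EuclideanSpace ℂ (Fin N)) :
    quadForm w (channel P g θ ψ N) z = (N / √P : ℂ) *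
      ∑ n, g n * (inner ℂ w (steering N (θ n)) * inner ℂ (steering N (ψ n)) z) := by
  simp only [channel, quadForm_smul, quadForm_sum, quadForm_vecMulVec]

theorem tendsto_inner_steering_mul_inner_steering {a b c d : ℝ}
    (h : ∀ k : ℤ, Real.sin b - Real.sin a ≠ 2 * k) :
    Tendsto (fun N => inner ℂ (steering N a) (steering N b) * inner ℂ (steering N c) (steering N d))
      atTop (𝓝 0) :=
  (tendsto_inner_steering_zero h).zero_mul_isBoundedUnder_le
    (isBoundedUnder_of ⟨1, fun N => norm_inner_steering_le_one N c d⟩)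

theorem stmt13_general {P : ℕ} (g : Fin P → ℂ) (θ ψ : Fin P → ℝ)
    (hθ : ∀ n m : Fin P, n ≠ m →
      ∀ k : ℤ, Real.sin (θ n) - Real.sin (θ m) ≠ 2 * k) :
    ∀ m : Fin P,
      Tendsto
        (fun N : ℕ => (1 / (N : ℂ)) *
          quadForm (steering N (θ m)) (channel P g θ ψ N) (steering N (ψ m)))
        atTop (nhds (g m / (Real.sqrt P : ℂ))) := by
  intro m
  have hterm : ∀ n, Tendsto (fun N => g n * (inner ℂ (steering N (θ m)) (steering N (θ n)) *
      inner ℂ (steering N (ψ n)) (steering N (ψ m)))) atTop (𝓝 (if n = m then g m else 0)) := by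
    intro n
    by_cases hnm : n = m
    · rw [if_pos hnm]
      subst hnm
      refine tendsto_const_nhds.congr' ?_
      filter_upwards [eventually_ne_atTop 0] with N hN
      rw [inner_steering_self hN, inner_steering_self hN, mul_one, mul_one]
    · simpa [hnm] using (tendsto_inner_steering_mul_inner_steering (hθ n m hnm)).const_mul (g n)
  have hsum := (tendsto_finsetSum univ fun n _ => hterm n).const_mul (√P : ℂ)⁻¹
  rw [sum_ite_eq' univ m, if_pos (mem_univ m), inv_mul_eq_div] at hsum
  refine hsum.congr' ?_
  filter_upwards [eventually_ne_atTop 0] with N hN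
  rw [quadForm_channel]
  field_simp

/-- Beamforming matched to path `m` asymptotically extracts exactly the gain
of path `m`: `(1/N)·a_N(θ_m)^* H_N a_N(ψ_m) → g_m/√P`. -/
theorem stmt13 {P : ℕ} (hP : 0 < P) (g : Fin P → ℂ) (θ ψ : Fin P → ℝ)
    (hθ : ∀ n m : Fin P, n ≠ m →
      ∀ k : ℤ, Real.sin (θ n) - Real.sin (θ m) ≠ 2 * k)
    (hψ : ∀ n m : Fin P, n ≠ m →
      ∀ k : ℤ, Real.sin (ψ n) - Real.sin (ψ m) ≠ 2 * k) :
    ∀ m : Fin P,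
      Tendsto
        (fun N : ℕ => (1 / (N : ℂ)) *
          quadForm (steering N (θ m)) (channel P g θ ψ N) (steering N (ψ m)))
        atTop (nhds (g m / (Real.sqrt P : ℂ))) :=
  stmt13_general g θ ψ hθ
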